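/- Fix μ > 0 and ε > 0. Then the limit, as t → 0⁺, of (1/(2π)) · ∫₀^ε ( ∫_ℝ cos(2xξ) · exp(−tμξ²) dξ ) dx equals 1/4. -/

import Mathlib

/-!
The inner integral is the Fourier transform of a Gaussian, `√(π/b) e^{-x²/b}` with `b = tμ`.
Substituting `x = √b y` turns the outer integral into `√π ∫₀^{ε/√b} e^{-y²} dy`, and as `b → 0⁺`
this tends to `√π · √π / 2`, so the whole expression tends to `π / 2 / (2π) = 1/4`.
-/

open MeasureTheory Real Filter Topology

theorem integral_cos_mul_mul_exp_neg_mul_sq {b : ℝ} (hb : 0 < b) (s : ℝ) :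
    ∫ ξ : ℝ, cos (s * ξ) * exp (-b * ξ ^ 2) = √(π / b) * exp (-s ^ 2 / (4 * b)) := by
  have hb' : 0 < (b : ℂ).re := by simpa using hb
  have hre (ξ : ℝ) : cos (s * ξ) * exp (-b * ξ ^ 2)
      = (Complex.exp (Complex.I * s * ξ) * Complex.exp (-(b : ℂ) * ξ ^ 2)).re := by
    rw [show Complex.I * s * ξ = ((s * ξ : ℝ) : ℂ) * Complex.I by push_cast; ring,
      show -(b : ℂ) * ξ ^ 2 = ((-b * ξ ^ 2 : ℝ) : ℂ) by push_cast; ring,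
      ← Complex.ofReal_exp, Complex.re_mul_ofReal, Complex.exp_ofReal_mul_I_re]
  have hint : Integrable fun ξ : ℝ ↦
      Complex.exp (Complex.I * s * ξ) * Complex.exp (-(b : ℂ) * ξ ^ 2) := by
    refine (integrable_cexp_quadratic hb' (Complex.I * s) 0).congr (ae_of_all _ fun ξ ↦ ?_)
    dsimp only
    rw [add_zero, Complex.exp_add, mul_comm]
  have hsqrt : ((π : ℂ) / b) ^ (1 / 2 : ℂ) = ((√(π / b) : ℝ) : ℂ) := by
    rw [sqrt_eq_rpow, Complex.ofReal_cpow (by positivity)]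
    push_cast
    rfl
  simp_rw [hre]
  rw [← RCLike.re_eq_complex_re, integral_re hint, RCLike.re_eq_complex_re,
    fourierIntegral_gaussian hb', hsqrt,
    show -(s : ℂ) ^ 2 / (4 * b) = ((-s ^ 2 / (4 * b) : ℝ) : ℂ) by push_cast; ring,
    ← Complex.ofReal_exp, ← Complex.ofReal_mul, Complex.ofReal_re]

theorem intervalIntegral_exp_neg_sq_div {c : ℝ} (hc : 0 < c) (a : ℝ) :
    ∫ x in (0 : ℝ)..a, exp (-x ^ 2 / c) = √c * ∫ y in (0 : ℝ)..a / √c, exp (-y ^ 2) := by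
  have h (x : ℝ) : exp (-x ^ 2 / c) = exp (-(x / √c) ^ 2) := by
    rw [div_pow, sq_sqrt hc.le, neg_div]
  simp_rw [h]
  rw [intervalIntegral.integral_comp_div (fun y ↦ exp (-y ^ 2)) (sqrt_pos.2 hc).ne', zero_div,
    smul_eq_mul]

theorem tendsto_intervalIntegral_exp_neg_sq_atTop :
    Tendsto (fun R ↦ ∫ y in (0 : ℝ)..R, exp (-y ^ 2)) atTop (𝓝 (√π / 2)) := by
  have h := intervalIntegral_tendsto_integral_Ioi 0
    (integrable_exp_neg_mul_sq one_pos).integrableOn tendsto_id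
  rw [integral_gaussian_Ioi, div_one] at h
  simpa only [neg_one_mul, id_eq] using h

theorem setIntegral_Ioo_integral_cos_mul_exp_neg_mul_sq {b ε : ℝ} (hb : 0 < b) (hε : 0 ≤ ε) :
    ∫ x in Set.Ioo 0 ε, ∫ ξ : ℝ, cos (2 * x * ξ) * exp (-b * ξ ^ 2)
      = √π * ∫ y in (0 : ℝ)..ε / √b, exp (-y ^ 2) := by
  have hinner (x : ℝ) :
      ∫ ξ : ℝ, cos (2 * x * ξ) * exp (-b * ξ ^ 2) = √(π / b) * exp (-x ^ 2 / b) := by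
    rw [integral_cos_mul_mul_exp_neg_mul_sq hb]
    congr 2
    field_simp
    ring
  simp_rw [hinner]
  rw [integral_const_mul, ← integral_Ioc_eq_integral_Ioo, ← intervalIntegral.integral_of_le hε,
    intervalIntegral_exp_neg_sq_div hb, sqrt_div' _ hb.le, ← mul_assoc,
    div_mul_cancel₀ _ (sqrt_pos.2 hb).ne']

theorem tendsto_div_sqrt_mul_nhdsGT_zero {ε μ : ℝ} (hε : 0 < ε) (hμ : 0 < μ) :
    Tendsto (fun t ↦ ε / √(t * μ)) (𝓝[>] 0) atTop := by
  have hsqrt : Tendsto (fun t ↦ √(t * μ)) (𝓝[>] 0) (𝓝[>] 0) := by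
    refine tendsto_nhdsWithin_of_tendsto_nhds_of_eventually_within _ ?_
      (eventually_nhdsWithin_of_forall fun t ht ↦ sqrt_pos.2 (mul_pos ht hμ))
    simpa using ((continuous_id.mul continuous_const).sqrt.tendsto 0).mono_left nhdsWithin_le_nhds
  simpa only [div_eq_mul_inv, Function.comp_def] using
    (tendsto_inv_nhdsGT_zero.const_mul_atTop hε).comp hsqrt

/-- Boundary-layer computation: for `μ > 0` and `ε > 0`,
`(1/(2π)) ∫₀^ε ∫_ℝ cos(2xξ) e^{-tμξ²} dξ dx → 1/4` as `t → 0⁺`. -/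
theorem stokes_stmt_6 (μ ε : ℝ) (hμ : 0 < μ) (hε : 0 < ε) :
    Tendsto
      (fun t : ℝ =>
        (1 / (2 * π)) *
          ∫ x in Set.Ioo (0 : ℝ) ε, ∫ ξ : ℝ, Real.cos (2 * x * ξ) * Real.exp (-t * μ * ξ ^ 2))
      (𝓝[>] 0) (𝓝 (1 / 4)) := by
  have hlim : Tendsto (fun t ↦ 1 / (2 * π) * (√π * ∫ y in (0 : ℝ)..ε / √(t * μ), exp (-y ^ 2)))
      (𝓝[>] 0) (𝓝 (1 / 4)) := by
    have h := ((tendsto_intervalIntegral_exp_neg_sq_atTop.comp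
      (tendsto_div_sqrt_mul_nhdsGT_zero hε hμ)).const_mul √π).const_mul (1 / (2 * π))
    rwa [show 1 / (2 * π) * (√π * (√π / 2)) = 1 / 4 by
      field_simp; rw [sq_sqrt pi_pos.le]; ring] at h
  refine hlim.congr' (eventually_nhdsWithin_of_forall fun t ht ↦ ?_)
  dsimp only
  rw [neg_mul t μ, setIntegral_Ioo_integral_cos_mul_exp_neg_mul_sq (mul_pos ht hμ) hε.le]
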